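/- Let A be a torsion-free abelian group and L an A-graded Lie algebra admitting a finite group H of double automorphisms of order q such that for every nontrivial h ∈ H the automorphism of A induced by h fixes only the zero element of A, and such that C_L(H) is nilpotent of class at most c. Then for every a ∈ A and every nonzero b ∈ A one has [L_a, L_b, …, L_b] = 0 (left-normed), where L_b occurs q^{c+1} + c + 2 times. -/

import Mathlib

/-
For `x ∈ L_a` and `y₁, y₂, … ∈ L_b` put `v_k = [x, y₁, …, y_k] ∈ L_{a+kb}` and
`T u = ∑_{h ∈ H} h u ∈ C_L(H)`, so that `[T v_k, T y_{k+1}, …, T y_{k+c}] = 0`. Expanding, this is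
the sum over `(g, t) ∈ H × H^c` of `[g v_k, t₁ y_{k+1}, …, t_c y_{k+c}]`, of degree
`g (a + kb) + ∑ tᵢ b`; the term `(1, 1)` is `v_{k+c}`. No other term with `g = 1` has degree
`a + (k+c)b`: `b` is an extreme point of its orbit, since the orbit lies on a sphere of an
`H`-invariant positive definite form on the lattice it spans. A term with `g ≠ 1` has that degree
for at most one `k`, because `C_A(g) = 0` and `A` is torsion-free. As there are only `q^(c+1)`
pairs `(g, t)`, some `k ≤ q^(c+1)` leaves `v_{k+c}` alone in degree `a + (k+c)b`, so `v_{k+c} = 0`.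
-/

/-- Left-normed iterated Lie bracket of a list of elements:
`listBracket [x₁, x₂, …, xₙ] = [x₁, x₂, …, xₙ]` (left-normed); the empty list gives `0`.
A Lie algebra is nilpotent of class at most `c` iff `listBracket xs = 0` for every
list `xs` of length `c + 1`. -/
def listBracket {L : Type*} [LieRing L] : List L → L
  | [] => 0
  | x :: ys => ys.foldl (fun a b => ⁅a, b⁆) x

theorem eq_of_sum_eq_card_nsmul_of_dotProduct_self_eq {R κ ι : Type*} [CommRing R]
    [LinearOrder R] [IsStrictOrderedRing R] [Fintype κ] [Fintype ι] {v : ι → κ → R} {w : κ → R}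
    (hnorm : ∀ i, v i ⬝ᵥ v i = w ⬝ᵥ w) (hsum : ∑ i, v i = Fintype.card ι • w) (i : ι) :
    v i = w := by
  have hsq : ∀ i, (v i - w) ⬝ᵥ (v i - w) = 2 * (w ⬝ᵥ w - v i ⬝ᵥ w) := fun i => by
    rw [sub_dotProduct, dotProduct_sub, dotProduct_sub, hnorm, dotProduct_comm w (v i)]
    ring
  have htotal : ∑ i, (v i - w) ⬝ᵥ (v i - w) = 0 := by
    rw [Finset.sum_congr rfl fun i _ => hsq i, ← Finset.mul_sum, Finset.sum_sub_distrib,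
      Finset.sum_const, Finset.card_univ, ← sum_dotProduct, hsum, smul_dotProduct, sub_self,
      mul_zero]
  have hnonneg : ∀ u : κ → R, 0 ≤ u ⬝ᵥ u := fun u => Finset.sum_nonneg fun k _ => mul_self_nonneg _
  have hi := (Finset.sum_eq_zero_iff_of_nonneg fun i _ => hnonneg _).mp htotal i (Finset.mem_univ i)
  exact sub_eq_zero.mp (dotProduct_self_eq_zero.mp hi)

section Orbit

variable {G A : Type*} [Group G] [AddCommGroup A] [DistribMulAction G A]

variable (G) in
def orbitSpan (b : A) : Submodule ℤ A := Submodule.span ℤ (Set.range fun g : G => g • b)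

theorem smul_mem_orbitSpan (g : G) {b u : A} (hu : u ∈ orbitSpan G b) :
    g • u ∈ orbitSpan G b := by
  have hle : orbitSpan G b ≤
      (orbitSpan G b).comap (DistribSMul.toAddMonoidHom A g).toIntLinearMap :=
    Submodule.span_le.2 <| by
      rintro _ ⟨h, rfl⟩
      exact Submodule.subset_span ⟨g * h, mul_smul g h b⟩
  exact hle hu

theorem smul_eq_of_sum_smul_eq_card_nsmul [Finite G] [IsAddTorsionFree A] {ι : Type*}
    [Fintype ι] (t : ι → G) (b : A) (hsum : ∑ i, t i • b = Fintype.card ι • b) (i : ι) :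
    t i • b = b := by
  have := Fintype.ofFinite G
  let B := orbitSpan G b
  have : Module.Finite ℤ B := Module.Finite.span_of_finite ℤ (Set.finite_range _)
  let e := Module.Free.chooseBasis ℤ B
  let act (g : G) : B →ₗ[ℤ] B :=
    (DistribSMul.toAddMonoidHom A g).toIntLinearMap.restrict fun _ => smul_mem_orbitSpan g
  have hact (g : G) (u : B) : (act g u : A) = g • (u : A) := rfl
  have hact_one (u : B) : act 1 u = u := Subtype.ext (one_smul G (u : A))
  have hact_mul (g h : G) (u : B) : act g (act h u) = act (g * h) u :=
    Subtype.ext (mul_smul g h (u : A)).symm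
  let V : B →ₗ[ℤ] (G × Module.Free.ChooseBasisIndex ℤ B → ℤ) :=
    LinearMap.pi fun p => e.coord p.2 ∘ₗ act p.1
  have hV_inj : Function.Injective V := by
    refine (injective_iff_map_eq_zero V).2 fun u hu => e.repr.injective ?_
    ext k
    simpa [V, hact_one] using congrFun hu (1, k)
  have hV_act (g : G) (u : B) :
      V (act g u) = V u ∘ Equiv.prodCongr (Equiv.mulRight g) (Equiv.refl _) := by
    ext ⟨h, k⟩
    simp [V, hact_mul]
  let b' : B := ⟨b, Submodule.subset_span ⟨1, one_smul G b⟩⟩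
  have hnorm (g : G) : V (act g b') ⬝ᵥ V (act g b') = V b' ⬝ᵥ V b' := by
    rw [hV_act]
    exact Fintype.sum_equiv (Equiv.prodCongr (Equiv.mulRight g) (Equiv.refl _)) _ _ fun _ => rfl
  have hsumV : ∑ i, V (act (t i) b') = Fintype.card ι • V b' := by
    rw [← map_sum, ← map_nsmul]
    congr 1
    ext
    simpa [hact, b'] using hsum
  exact congrArg Subtype.val
    (hV_inj (eq_of_sum_eq_card_nsmul_of_dotProduct_self_eq (fun i => hnorm (t i)) hsumV i))

end Orbit

theorem exists_le_card_forall_not {P : Type*} [Fintype P] (bad : P → ℕ → Prop)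
    (huniq : ∀ p k k', bad p k → bad p k' → k = k') :
    ∃ k ≤ Fintype.card P, ∀ p, ¬ bad p k := by
  by_contra! h
  choose f hf using h
  obtain ⟨k, k', hne, heq⟩ := Fintype.exists_ne_map_eq_of_card_lt
    (fun k : Fin (Fintype.card P + 1) => f k (Nat.lt_succ_iff.mp k.isLt)) (by simp)
  exact hne (Fin.ext (huniq _ _ _ (hf _ _) (heq ▸ hf k' _)))

section Degree

variable {H A : Type*} [Group H] [AddCommGroup A] [DistribMulAction H A]

/-- For `v ∈ L_d` and `y₁, …, y_j ∈ L_b`, the degree of `[g v, t₁ y₁, …, t_j y_j]`. -/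
def tupleDegree (d b : A) {j : ℕ} (p : H × (Fin j → H)) : A := p.1 • d + ∑ i, p.2 i • b

theorem tupleDegree_one (d b : A) (j : ℕ) :
    tupleDegree d b ((1 : H), (1 : Fin j → H)) = d + j • b := by
  simp [tupleDegree]

theorem tupleDegree_snoc (d b : A) {j : ℕ} (g : H) (t : Fin j → H) (h : H) :
    tupleDegree d b (g, Fin.snoc t h) = tupleDegree d b (g, t) + h • b := by
  simp [tupleDegree, Fin.sum_univ_castSucc, add_assoc]

theorem Fin.snoc_eq_one_iff {M : Type*} [One M] {j : ℕ} {t : Fin j → M} {h : M} :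
    (Fin.snoc t h : Fin (j + 1) → M) = 1 ↔ t = 1 ∧ h = 1 := by
  refine ⟨fun e => ⟨?_, by simpa using congrFun e (Fin.last j)⟩, ?_⟩
  · exact (by simpa using congrArg Fin.init e : t = Fin.init (1 : Fin (j + 1) → M))
  rintro ⟨rfl, rfl⟩
  ext i
  induction i using Fin.lastCases <;> simp

theorem eq_one_of_tupleDegree_eq [Finite H] [IsAddTorsionFree A]
    (hfree : ∀ g : H, g ≠ 1 → ∀ a : A, g • a = a → a = 0) {b d : A} (hb : b ≠ 0) {j : ℕ}
    {t : Fin j → H} (h : tupleDegree d b ((1 : H), t) = d + j • b) : t = 1 := by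
  have hsum : ∑ i, t i • b = Fintype.card (Fin j) • b := by simpa [tupleDegree] using h
  funext i
  by_contra hne
  exact hb (hfree _ hne _ (smul_eq_of_sum_smul_eq_card_nsmul t b hsum i))

theorem eq_of_smul_add_eq_add_nsmul [IsAddTorsionFree A]
    (hfree : ∀ g : H, g ≠ 1 → ∀ a : A, g • a = a → a = 0) {b : A} (hb : b ≠ 0) {g : H}
    (hg : g ≠ 1) {a s : A} {c k k' : ℕ} (hk : g • (a + k • b) + s = a + k • b + c • b)
    (hk' : g • (a + k' • b) + s = a + k' • b + c • b) : k = k' := by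
  have hfix : g • (((k : ℤ) - k') • b) = ((k : ℤ) - k') • b := by
    rw [smul_add, smul_comm] at hk hk'
    rw [smul_comm]
    generalize g • a = x at hk hk'
    generalize g • b = y at *
    linear_combination (norm := module) hk - hk'
  have := (smul_eq_zero.mp (hfree g hg _ hfix)).resolve_right hb
  omega

theorem exists_le_forall_tupleDegree_ne [Fintype H] [IsAddTorsionFree A]
    (hfree : ∀ g : H, g ≠ 1 → ∀ a : A, g • a = a → a = 0) {b : A} (hb : b ≠ 0) (a : A) (c : ℕ) :
    ∃ k ≤ Fintype.card H ^ (c + 1), ∀ p : H × (Fin c → H), p ≠ 1 →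
      tupleDegree (a + k • b) b p ≠ a + k • b + c • b := by
  obtain ⟨k, hk, hclean⟩ := exists_le_card_forall_not
    (fun (p : H × (Fin c → H)) k => p.1 ≠ 1 ∧ tupleDegree (a + k • b) b p = a + k • b + c • b)
    fun p k k' hk hk' => eq_of_smul_add_eq_add_nsmul hfree hb hk.1 hk.2 hk'.2
  refine ⟨k, by simpa [pow_succ, mul_comm] using hk, fun ⟨g, t⟩ hp hdeg => ?_⟩
  by_cases hg : g = 1
  · subst hg
    exact hp (Prod.ext rfl (eq_one_of_tupleDegree_eq hfree hb hdeg))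
  · exact hclean (g, t) ⟨hg, hdeg⟩

end Degree

section OrbitSum

variable {R M H : Type*} [Semiring R] [AddCommGroup M] [Module R M] [Group H] [Fintype H]

def orbitSum (ρ : H →* (M ≃ₗ[R] M)) (u : M) : M := ∑ g, ρ g u

theorem apply_orbitSum (ρ : H →* (M ≃ₗ[R] M)) (h : H) (u : M) :
    ρ h (orbitSum ρ u) = orbitSum ρ u := by
  simp only [orbitSum, map_sum]
  exact Fintype.sum_equiv (Equiv.mulLeft h) _ _ fun g => by simp [map_mul]

theorem orbitSum_sub_self [DecidableEq H] (ρ : H →* (M ≃ₗ[R] M)) (u : M) :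
    orbitSum ρ u - u = ∑ g ∈ Finset.univ.erase 1, ρ g u := by
  rw [Finset.sum_erase_eq_sub (Finset.mem_univ 1), map_one]
  rfl

end OrbitSum

theorem foldl_lie_zero {L : Type*} [LieRing L] (ys : List L) : ys.foldl (⁅·, ·⁆) 0 = 0 := by
  induction ys with
  | nil => rfl
  | cons y ys ih => rwa [List.foldl_cons, zero_lie]

section Graded

variable {R L A : Type*} [CommRing R] [LieRing L] [LieAlgebra R L] [AddCommGroup A]
  {Lc : A → Submodule R L}

theorem foldl_lie_mem (hgr : ∀ a b : A, ∀ x ∈ Lc a, ∀ y ∈ Lc b, ⁅x, y⁆ ∈ Lc (a + b)) {x : L}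
    {a b : A} (hx : x ∈ Lc a) (ys : List L) (hys : ∀ y ∈ ys, y ∈ Lc b) :
    ys.foldl (⁅·, ·⁆) x ∈ Lc (a + ys.length • b) := by
  induction ys generalizing x a with
  | nil => simpa using hx
  | cons y ys ih =>
    rw [List.foldl_cons, List.length_cons, succ_nsmul', ← add_assoc]
    exact ih (hgr _ _ _ hx _ (hys y List.mem_cons_self)) fun z hz =>
      hys z (List.mem_cons_of_mem y hz)

theorem lie_mem_biSup (hgr : ∀ a b : A, ∀ x ∈ Lc a, ∀ y ∈ Lc b, ⁅x, y⁆ ∈ Lc (a + b))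
    {ι : Type*} {S : Set ι} {f : ι → A} {e : A} {x y : L} (hx : x ∈ ⨆ i ∈ S, Lc (f i))
    (hy : y ∈ Lc e) : ⁅x, y⁆ ∈ ⨆ i ∈ S, Lc (f i + e) := by
  rw [← lie_skew]
  refine neg_mem ?_
  suffices (⨆ i ∈ S, Lc (f i)) ≤ (⨆ i ∈ S, Lc (f i + e)).comap (LieModule.toEnd R L L y) from
    this hx
  refine iSup₂_le fun i hi z hz => ?_
  have hyz : ⁅y, z⁆ ∈ Lc (f i + e) := add_comm e (f i) ▸ hgr _ _ _ hy _ hz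
  exact (le_iSup₂ (f := fun i (_ : i ∈ S) => Lc (f i + e)) i hi) hyz

variable {H : Type*} [Group H] [Fintype H] [DistribMulAction H A] {ρ : H →* (L ≃ₗ[R] L)}

theorem orbitSum_sub_self_mem (hρ : ∀ g d, ∀ x ∈ Lc d, ρ g x ∈ Lc (g • d)) {v : L} {d : A}
    (b : A) (hv : v ∈ Lc d) :
    orbitSum ρ v - v ∈ ⨆ p ∈ ({1}ᶜ : Set (H × (Fin 0 → H))), Lc (tupleDegree d b p) := by
  classical
  rw [orbitSum_sub_self]
  refine Submodule.sum_mem _ fun g hg => Submodule.mem_iSup_of_mem (g, 1) ?_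
  refine Submodule.mem_iSup_of_mem (by simpa using Finset.ne_of_mem_erase hg) ?_
  simpa [tupleDegree] using hρ g d v hv

theorem lie_orbitSum_sub_lie_mem (hgr : ∀ a b : A, ∀ x ∈ Lc a, ∀ y ∈ Lc b, ⁅x, y⁆ ∈ Lc (a + b))
    (hρ : ∀ g d, ∀ x ∈ Lc d, ρ g x ∈ Lc (g • d)) {d b : A} {j : ℕ} {W V y : L}
    (hWV : W - V ∈ ⨆ p ∈ ({1}ᶜ : Set (H × (Fin j → H))), Lc (tupleDegree d b p))
    (hV : V ∈ Lc (d + j • b)) (hy : y ∈ Lc b) :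
    ⁅W, orbitSum ρ y⁆ - ⁅V, y⁆ ∈
      ⨆ p ∈ ({1}ᶜ : Set (H × (Fin (j + 1) → H))), Lc (tupleDegree d b p) := by
  classical
  have hsplit : ⁅W, orbitSum ρ y⁆ - ⁅V, y⁆ = ⁅W - V, orbitSum ρ y⁆ + ⁅V, orbitSum ρ y - y⁆ := by
    rw [sub_lie, lie_sub]
    abel
  rw [hsplit, orbitSum_sub_self, orbitSum, lie_sum, lie_sum]
  refine add_mem (Submodule.sum_mem _ fun h _ => ?_) (Submodule.sum_mem _ fun h hh => ?_)
  · have hmono : (⨆ p ∈ ({1}ᶜ : Set (H × (Fin j → H))), Lc (tupleDegree d b p + h • b)) ≤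
        ⨆ p ∈ ({1}ᶜ : Set (H × (Fin (j + 1) → H))), Lc (tupleDegree d b p) :=
      iSup₂_mono' fun ⟨g, t⟩ hp => ⟨(g, Fin.snoc t h), by simp_all [Prod.ext_iff,
        Fin.snoc_eq_one_iff], by rw [tupleDegree_snoc]⟩
    exact hmono (lie_mem_biSup hgr hWV (hρ h b y hy))
  · refine Submodule.mem_iSup_of_mem ((1 : H), Fin.snoc 1 h) (Submodule.mem_iSup_of_mem ?_ ?_)
    · simpa [Prod.ext_iff, Fin.snoc_eq_one_iff] using Finset.ne_of_mem_erase hh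
    · rw [tupleDegree_snoc, tupleDegree_one]
      exact hgr _ _ _ hV _ (hρ h b y hy)

theorem foldl_orbitSum_sub_mem (hgr : ∀ a b : A, ∀ x ∈ Lc a, ∀ y ∈ Lc b, ⁅x, y⁆ ∈ Lc (a + b))
    (hρ : ∀ g d, ∀ x ∈ Lc d, ρ g x ∈ Lc (g • d)) {v : L} {d b : A}
    (hv : v ∈ Lc d) (ys : List L) (hys : ∀ y ∈ ys, y ∈ Lc b) (j : ℕ) (hj : ys.length = j) :
    (ys.map (orbitSum ρ)).foldl (⁅·, ·⁆) (orbitSum ρ v) - ys.foldl (⁅·, ·⁆) v ∈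
      ⨆ p ∈ ({1}ᶜ : Set (H × (Fin j → H))), Lc (tupleDegree d b p) := by
  induction ys using List.reverseRecOn generalizing j with
  | nil =>
    subst hj
    exact orbitSum_sub_self_mem hρ b hv
  | append_singleton ys y ih =>
    obtain rfl : j = ys.length + 1 := by simpa using hj.symm
    have hys' : ∀ z ∈ ys, z ∈ Lc b := fun z hz => hys z (by simp [hz])
    simp only [List.map_append, List.map_cons, List.map_nil, List.foldl_append, List.foldl_cons,
      List.foldl_nil]
    exact lie_orbitSum_sub_lie_mem hgr hρ (ih hys' _ rfl) (foldl_lie_mem hgr hv ys hys')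
      (hys y (by simp))

theorem foldl_lie_eq_zero_of_orbitSum
    (hgr : ∀ a b : A, ∀ x ∈ Lc a, ∀ y ∈ Lc b, ⁅x, y⁆ ∈ Lc (a + b)) (hind : iSupIndep Lc)
    (hρ : ∀ g d, ∀ x ∈ Lc d, ρ g x ∈ Lc (g • d)) {v : L} {d b : A}
    (hv : v ∈ Lc d) (ys : List L) (hys : ∀ y ∈ ys, y ∈ Lc b) (j : ℕ) (hj : ys.length = j)
    (hzero : (ys.map (orbitSum ρ)).foldl (⁅·, ·⁆) (orbitSum ρ v) = 0)
    (hdeg : ∀ p : H × (Fin j → H), p ≠ 1 → tupleDegree d b p ≠ d + j • b) :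
    ys.foldl (⁅·, ·⁆) v = 0 := by
  have hmem := foldl_orbitSum_sub_mem hgr hρ hv ys hys j hj
  rw [hzero, zero_sub, neg_mem_iff, ← iSup_image (g := Lc)] at hmem
  have hnot : d + j • b ∉ tupleDegree d b '' ({1}ᶜ : Set (H × (Fin j → H))) := by
    rintro ⟨p, hp, hpd⟩
    exact hdeg p hp hpd
  have hfold := foldl_lie_mem hgr hv ys hys
  rw [hj] at hfold
  exact Submodule.disjoint_def.mp (hind.disjoint_biSup hnot) _ hfold hmem

end Graded

abbrev DistribMulAction.ofAddAut {H A : Type*} [Group H] [AddCommGroup A]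
    (σ : H →* Multiplicative (AddAut A)) : DistribMulAction H A where
  smul g a := Multiplicative.toAdd (σ g) a
  one_smul a := by
    change Multiplicative.toAdd (σ 1) a = a
    rw [map_one]
    rfl
  mul_smul g h a := by
    change Multiplicative.toAdd (σ (g * h)) a =
      Multiplicative.toAdd (σ g) (Multiplicative.toAdd (σ h) a)
    rw [map_mul]
    rfl
  smul_zero g := map_zero _
  smul_add g := map_add _

theorem component_ad_nilpotent_torsion_free_general
    (R : Type*) [CommRing R] (L : Type*) [LieRing L] [LieAlgebra R L]
    (A : Type*) [AddCommGroup A] [DecidableEq A]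
    (htf : ∀ (n : ℕ) (a : A), n ≠ 0 → n • a = 0 → a = 0)
    (Lc : A → Submodule R L)
    (hint : DirectSum.IsInternal Lc)
    (hgr : ∀ a b : A, ∀ x ∈ Lc a, ∀ y ∈ Lc b, ⁅x, y⁆ ∈ Lc (a + b))
    (H : Type*) [Group H] [Finite H] (q : ℕ) (hq : Nat.card H = q)
    (ρ : H →* (L ≃ₗ[R] L)) (σ : H →* Multiplicative (AddAut A))
    (hcomp : ∀ (h : H) (a : A), ⇑(ρ h) '' (Lc a : Set L) = (Lc (Multiplicative.toAdd (σ h) a) : Set L))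
    (hfree : ∀ h : H, h ≠ 1 → ∀ a : A, Multiplicative.toAdd (σ h) a = a → a = 0)
    (c : ℕ)
    (hCL : ∀ xs : List L, xs.length = c + 1 → (∀ y ∈ xs, ∀ h : H, ρ h y = y) →
      listBracket xs = 0) :
    ∀ (a b : A), b ≠ 0 → ∀ x ∈ Lc a,
      ∀ xs : List L, xs.length = q ^ (c + 1) + c + 2 → (∀ y ∈ xs, y ∈ Lc b) →
        listBracket (x :: xs) = 0 := by
  intro a b hb x hx xs hlen hxs
  let := DistribMulAction.ofAddAut σ
  have : IsAddTorsionFree A :=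
    ⟨fun n hn u w huw => sub_eq_zero.mp (htf n _ hn (by simp [nsmul_sub, huw]))⟩
  have := Fintype.ofFinite H
  have hρ : ∀ g d, ∀ y ∈ Lc d, ρ g y ∈ Lc (g • d) := fun g d y hy =>
    (hcomp g d).subset ⟨y, hy, rfl⟩
  obtain ⟨k, hkq, hk⟩ := exists_le_forall_tupleDegree_ne hfree hb a c
  rw [Fintype.card_eq_nat_card, hq] at hkq
  have hv : (xs.take k).foldl (⁅·, ·⁆) x ∈ Lc (a + k • b) := by
    have := foldl_lie_mem hgr hx (xs.take k) fun y hy => hxs y (List.mem_of_mem_take hy)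
    rwa [List.length_take_of_le (by omega)] at this
  have hys_len : ((xs.drop k).take c).length = c := by
    rw [List.length_take, List.length_drop]
    omega
  have hzero : ((xs.drop k).take c).foldl (⁅·, ·⁆) ((xs.take k).foldl (⁅·, ·⁆) x) = 0 := by
    refine foldl_lie_eq_zero_of_orbitSum hgr hint.submodule_iSupIndep hρ hv _
      (fun y hy => hxs y (List.mem_of_mem_drop (List.mem_of_mem_take hy)))
      c hys_len (hCL (_ :: List.map (orbitSum ρ) _) ?_ ?_) hk
    · rw [List.length_cons, List.length_map, hys_len]
    simp only [List.mem_cons, List.mem_map]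
    rintro _ (rfl | ⟨y, -, rfl⟩) h <;> exact apply_orbitSum ρ h _
  rw [listBracket, ← List.take_append_drop k xs, List.foldl_append,
    ← List.take_append_drop c (xs.drop k), List.foldl_append, hzero, foldl_lie_zero]

/-- **(Proved inside Theorem 1.3.)** Let `A` be a torsion-free abelian group and `L` an
`A`-graded Lie algebra admitting a finite group `H` of double automorphisms of order `q`
with `C_A(h) = 0` for all nontrivial `h ∈ H` and `C_L(H)` nilpotent of class at most `c`.
Then for every `a ∈ A` and every nonzero `b ∈ A`, `[L_a, L_b, …, L_b] = 0` (left-normed)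
with `L_b` occurring `q ^ (c + 1) + c + 2` times. -/
theorem component_ad_nilpotent_torsion_free
    (R : Type*) [CommRing R] (L : Type*) [LieRing L] [LieAlgebra R L]
    (A : Type*) [AddCommGroup A] [DecidableEq A]
    (htf : ∀ (n : ℕ) (a : A), n ≠ 0 → n • a = 0 → a = 0)
    (Lc : A → Submodule R L)
    (hint : DirectSum.IsInternal Lc)
    (hgr : ∀ a b : A, ∀ x ∈ Lc a, ∀ y ∈ Lc b, ⁅x, y⁆ ∈ Lc (a + b))
    (H : Type*) [Group H] [Finite H] (q : ℕ) (hq : Nat.card H = q)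
    (ρ : H →* (L ≃ₗ[R] L)) (σ : H →* Multiplicative (AddAut A))
    (hbr : ∀ (h : H) (x y : L), ρ h ⁅x, y⁆ = ⁅ρ h x, ρ h y⁆)
    (hcomp : ∀ (h : H) (a : A), ⇑(ρ h) '' (Lc a : Set L) = (Lc (Multiplicative.toAdd (σ h) a) : Set L))
    (hfree : ∀ h : H, h ≠ 1 → ∀ a : A, Multiplicative.toAdd (σ h) a = a → a = 0)
    (c : ℕ)
    (hCL : ∀ xs : List L, xs.length = c + 1 → (∀ y ∈ xs, ∀ h : H, ρ h y = y) →
      listBracket xs = 0) :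
    ∀ (a b : A), b ≠ 0 → ∀ x ∈ Lc a,
      ∀ xs : List L, xs.length = q ^ (c + 1) + c + 2 → (∀ y ∈ xs, y ∈ Lc b) →
        listBracket (x :: xs) = 0 :=
  component_ad_nilpotent_torsion_free_general R L A htf Lc hint hgr H q hq ρ σ hcomp hfree c hCL
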